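/- (L^p bounds for the unfolding operator, Prop. 3.3(iv), 1 ≤ p < ∞.) Let ε > 0, fix a partition of (0,1) for the parameter ε, and let 1 ≤ p < ∞. Then for every φ ∈ L^p(R^ε) the function T_ε(φ) belongs to L^p((0,1) × Y*) and (l_0/ε)^{1/p} ‖φ‖_{L^p(R^ε)} ≤ ‖T_ε(φ)‖_{L^p((0,1)×Y*)} ≤ (l_1/ε)^{1/p} ‖φ‖_{L^p(R^ε)}. -/

import Mathlib

/-!
On a cell `[x_k, x_{k+1})` of the partition, `T_ε φ (x, y)` does not depend on `x`, and the affine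
map `y ↦ (x_k + Γ_k y₁, ε y₂)` carries `(0, l(x_k)) × (0, G₁)` onto `(x_k, x_{k+1}) × (0, ε G₁)`
with Jacobian `Γ_k ε`. So the integral of `|T_ε φ|^p` over the strip above the cell is
`(x_{k+1} - x_k) / (Γ_k ε) = l(x_k) / ε` times the integral of `|φ|^p` over the part of `R^ε`
above the cell (which lies below height `ε G₁`). Summing over the cells and using
`l₀ ≤ l(x_k) ≤ l₁` gives both bounds.
-/

open MeasureTheory Set Filter Topology
open scoped ENNReal

noncomputable section

/-- The thin domain `R^ε = {(x,y) : x ∈ (0,1), 0 < y < ε G(x, x/ε)}`. -/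
def thinDomain (G : ℝ → ℝ → ℝ) (ε : ℝ) : Set (ℝ × ℝ) :=
  {z : ℝ × ℝ | z.1 ∈ Ioo (0 : ℝ) 1 ∧ z.2 ∈ Ioo (0 : ℝ) (ε * G z.1 (z.1 / ε))}

/-- The reference cell `Y* = (0,l₁) × (0,G₁)`. -/
def Ystar (l1 G1 : ℝ) : Set (ℝ × ℝ) := Ioo (0 : ℝ) l1 ×ˢ Ioo (0 : ℝ) G1

/-- A partition `0 = x₀ < x₁ < ⋯ < x_{N+1} = 1` of the interval `(0,1)` (for a parameter `ε`). -/
structure ThinPartition where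
  N : ℕ
  pts : ℕ → ℝ
  pts_zero : pts 0 = 0
  pts_last : pts (N + 1) = 1
  pts_lt : ∀ k ≤ N, pts k < pts (k + 1)

/-- The index `k` such that `x ∈ [x_k, x_{k+1})` (for `x ∈ [0,1)`). -/
def ThinPartition.idx (P : ThinPartition) (x : ℝ) : ℕ :=
  Nat.findGreatest (fun k => P.pts k ≤ x) P.N

/-- `[x]_ε`, the partition point just below `x`. -/
def ThinPartition.bracket (P : ThinPartition) (x : ℝ) : ℝ := P.pts (P.idx x)

/-- `Γ_{[x]_ε} = (x_{k+1} - x_k) / l(x_k)` for `x ∈ [x_k, x_{k+1})`. -/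
def ThinPartition.Gamma (P : ThinPartition) (l : ℝ → ℝ) (x : ℝ) : ℝ :=
  (P.pts (P.idx x + 1) - P.pts (P.idx x)) / l (P.pts (P.idx x))

/-- The unfolding operator `T_ε` associated to a partition, acting on a function `φ` on `R^ε`
(extended by zero to all of `ℝ²` via the indicator of `R^ε`). -/
def unfoldOp (G : ℝ → ℝ → ℝ) (l : ℝ → ℝ) (ε : ℝ) (P : ThinPartition)
    (φ : ℝ × ℝ → ℝ) : ℝ × ℝ × ℝ → ℝ := fun q =>
  if q.2.1 < l (P.bracket q.1) then
    (thinDomain G ε).indicator φ (P.bracket q.1 + P.Gamma l q.1 * q.2.1, ε * q.2.2)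
  else 0

/-- The averaging operator `U_ε`, the formal adjoint of `T_ε`. -/
def avgOp (l : ℝ → ℝ) (ε : ℝ) (P : ThinPartition) (ψ : ℝ × ℝ × ℝ → ℝ) : ℝ × ℝ → ℝ := fun z =>
  (1 / l (P.bracket z.1)) *
    ∫ y₁ in Ioo (0 : ℝ) (l (P.bracket z.1)),
      ψ (P.bracket z.1 + P.Gamma l z.1 * y₁, (z.1 - P.bracket z.1) / P.Gamma l z.1, z.2 / ε)

/-- The limit set `W = {(x,y₁,y₂) : x ∈ (0,1), 0 < y₁ < l(x), 0 < y₂ < G(x,y₁)}`. -/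
def Wset (G : ℝ → ℝ → ℝ) (l : ℝ → ℝ) : Set (ℝ × ℝ × ℝ) :=
  {q | q.1 ∈ Ioo (0 : ℝ) 1 ∧ q.2.1 ∈ Ioo (0 : ℝ) (l q.1) ∧ q.2.2 ∈ Ioo (0 : ℝ) (G q.1 q.2.1)}

/-- The set `W₀ = {(x,y₁) : x ∈ (0,1), 0 < y₁ < l(x)}`. -/
def W0set (l : ℝ → ℝ) : Set (ℝ × ℝ) :=
  {z : ℝ × ℝ | z.1 ∈ Ioo (0 : ℝ) 1 ∧ z.2 ∈ Ioo (0 : ℝ) (l z.1)}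

theorem Real.map_volume_const_add_mul (b : ℝ) {a : ℝ} (ha : a ≠ 0) :
    Measure.map (fun y => b + a * y) volume = ENNReal.ofReal |a⁻¹| • volume := by
  rw [show (fun y => b + a * y) = (b + ·) ∘ (a * ·) from rfl,
    ← Measure.map_map (measurable_const_add b) (measurable_const_mul a),
    Real.map_volume_mul_left ha, Measure.map_smul, map_add_left_eq_self]

theorem setLIntegral_comp_affine_prod (b : ℝ) {a c : ℝ} (ha : 0 < a) (hc : 0 < c)
    (f : ℝ × ℝ → ℝ≥0∞) (s : Set (ℝ × ℝ)) :
    ∫⁻ y in (fun y : ℝ × ℝ => (b + a * y.1, c * y.2)) ⁻¹' s, f (b + a * y.1, c * y.2)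
      = ENNReal.ofReal (a * c)⁻¹ * ∫⁻ z in s, f z := by
  have hemb : MeasurableEmbedding (Prod.map (fun y : ℝ => b + a * y) (c * ·)) :=
    ((Homeomorph.mulLeft₀ a ha.ne').trans (Homeomorph.addLeft b)).measurableEmbedding.prodMap
      (Homeomorph.mulLeft₀ c hc.ne').measurableEmbedding
  have hmap : MeasurePreserving (Prod.map (fun y : ℝ => b + a * y) (c * ·)) volume
      (ENNReal.ofReal (a * c)⁻¹ • volume) := by
    refine ⟨hemb.measurable, ?_⟩
    rw [Measure.volume_eq_prod, ← Measure.map_prod_map _ _ (by fun_prop) (by fun_prop),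
      Real.map_volume_const_add_mul b ha.ne', Real.map_volume_mul_left hc.ne',
      Measure.prod_smul_left, Measure.prod_smul_right, smul_smul, abs_of_pos (inv_pos.2 ha),
      abs_of_pos (inv_pos.2 hc), ← ENNReal.ofReal_mul (by positivity), mul_inv]
  rw [← smul_eq_mul, ← lintegral_smul_measure, ← Measure.restrict_smul]
  exact hmap.setLIntegral_comp_preimage_emb hemb f s

theorem setLIntegral_prod_comp_snd {α β : Type*} [MeasurableSpace α] [MeasurableSpace β]
    (μ : Measure α) [SFinite μ] {ν : Measure β} [SFinite ν] (s : Set α) {t : Set β}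
    {g : β → ℝ≥0∞} (hg : AEMeasurable g (ν.restrict t)) :
    ∫⁻ q in s ×ˢ t, g q.2 ∂μ.prod ν = μ s * ∫⁻ y in t, g y ∂ν := by
  rw [← Measure.prod_restrict]
  simpa using lintegral_prod_mul (μ := μ.restrict s) (f := fun _ => 1) aemeasurable_const hg

theorem MeasureTheory.MemLp.toReal_eLpNorm_ofReal {α : Type*} [MeasurableSpace α]
    {μ : Measure α} {f : α → ℝ} {p : ℝ} (hp : 0 < p) (hf : MemLp f (ENNReal.ofReal p) μ) :
    (eLpNorm f (ENNReal.ofReal p) μ).toReal = (∫ x, |f x| ^ p ∂μ) ^ (1 / p) := by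
  rw [hf.eLpNorm_eq_integral_rpow_norm (by simpa using hp) ENNReal.ofReal_ne_top,
    ENNReal.toReal_ofReal hp.le, ENNReal.toReal_ofReal (by positivity), one_div]
  simp only [Real.norm_eq_abs]

theorem MeasureTheory.MemLp.toReal_ofReal_rpow_mul_eLpNorm {α : Type*} [MeasurableSpace α]
    {μ : Measure α} {f : α → ℝ} {p c : ℝ} (hp : 0 < p) (hc : 0 ≤ c)
    (hf : MemLp f (ENNReal.ofReal p) μ) :
    (ENNReal.ofReal c ^ (1 / (ENNReal.ofReal p).toReal) * eLpNorm f (ENNReal.ofReal p) μ).toReal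
      = c ^ (1 / p) * (∫ x, |f x| ^ p ∂μ) ^ (1 / p) := by
  rw [ENNReal.toReal_mul, ← ENNReal.toReal_rpow, ENNReal.toReal_ofReal hc,
    ENNReal.toReal_ofReal hp.le, hf.toReal_eLpNorm_ofReal hp]

theorem isOpen_thinDomain {G : ℝ → ℝ → ℝ} (ε : ℝ)
    (hG : ContinuousOn (fun z : ℝ × ℝ => G z.1 z.2) (Ioo 0 1 ×ˢ (univ : Set ℝ))) :
    IsOpen (thinDomain G ε) := by
  have hg : ContinuousOn (fun z : ℝ × ℝ => ε * G z.1 (z.1 / ε) - z.2) (Ioo 0 1 ×ˢ univ) :=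
    (continuousOn_const.mul (hG.comp (f := fun z : ℝ × ℝ => (z.1, z.1 / ε)) (by fun_prop)
      fun z (hz : z ∈ Ioo 0 1 ×ˢ univ) => ⟨hz.1, mem_univ _⟩)).sub continuousOn_snd
  convert (hg.isOpen_inter_preimage (isOpen_Ioo.prod isOpen_univ) (isOpen_Ioi (a := 0))).inter
    (isOpen_lt continuous_const continuous_snd) using 1
  ext z
  simp only [thinDomain, mem_ofPred_eq, mem_inter_iff, mem_prod, mem_preimage, mem_Ioi, mem_Ioo,
    mem_univ, and_true, sub_pos]
  tauto

theorem thinDomain_subset {G : ℝ → ℝ → ℝ} {ε G1 : ℝ} (hε : 0 < ε)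
    (hG : ∀ x ∈ Ioo (0 : ℝ) 1, ∀ y, G x y ≤ G1) :
    thinDomain G ε ⊆ Ioo 0 1 ×ˢ Ioo 0 (ε * G1) := fun z ⟨hx, hy⟩ =>
  ⟨hx, hy.1, hy.2.trans_le (mul_le_mul_of_nonneg_left (hG z.1 hx _) hε.le)⟩

namespace ThinPartition

variable (P : ThinPartition)

def cell (k : ℕ) : Set ℝ := Ico (P.pts k) (P.pts (k + 1))

theorem strictMonoOn_pts : StrictMonoOn P.pts (Iic (P.N + 1)) :=
  strictMonoOn_Iic_of_lt_succ fun m hm => P.pts_lt m (Nat.lt_succ_iff.1 hm)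

theorem pts_le_pts {i j : ℕ} (hij : i ≤ j) (hj : j ≤ P.N + 1) : P.pts i ≤ P.pts j :=
  P.strictMonoOn_pts.monotoneOn (mem_Iic.2 (hij.trans hj)) (mem_Iic.2 hj) hij

theorem pts_mem_Ico {k : ℕ} (hk : k ≤ P.N) : P.pts k ∈ Ico (0 : ℝ) 1 := by
  rw [← P.pts_zero, ← P.pts_last]
  exact ⟨P.pts_le_pts (Nat.zero_le k) (by omega),
    P.strictMonoOn_pts (mem_Iic.2 (by omega)) (mem_Iic.2 le_rfl) (by omega)⟩

theorem cell_subset_Ico {k : ℕ} (hk : k ≤ P.N) : P.cell k ⊆ Ico 0 1 := by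
  rw [← P.pts_zero, ← P.pts_last]
  exact Ico_subset_Ico (P.pts_le_pts (Nat.zero_le k) (by omega)) (P.pts_le_pts (by omega) le_rfl)

theorem idx_mono : Monotone P.idx := fun _ _ hxy =>
  Nat.findGreatest_mono (fun _ hk => hk.trans hxy) le_rfl

theorem idx_le (x : ℝ) : P.idx x ≤ P.N := Nat.findGreatest_le _

theorem idx_eq_of_mem_cell {k : ℕ} {x : ℝ} (hk : k ≤ P.N) (hx : x ∈ P.cell k) :
    P.idx x = k :=
  Nat.findGreatest_eq_iff.2 ⟨hk, fun _ => hx.1, fun _ hkn hnN =>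
    not_le.2 (hx.2.trans_le (P.pts_le_pts hkn (by omega)))⟩

theorem mem_cell_idx {x : ℝ} (hx : x ∈ Ico (0 : ℝ) 1) : x ∈ P.cell (P.idx x) := by
  refine ⟨Nat.findGreatest_spec (P := fun k => P.pts k ≤ x) (Nat.zero_le _)
    (P.pts_zero ▸ hx.1), ?_⟩
  rcases (P.idx_le x).lt_or_eq with hlt | heq
  · exact not_le.1 fun h => (Nat.lt_succ_self _).not_ge (Nat.le_findGreatest hlt h)
  · rw [heq, P.pts_last]
    exact hx.2

theorem biUnion_cell : ⋃ k ∈ Finset.range (P.N + 1), P.cell k = Ico 0 1 := by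
  refine Subset.antisymm
    (iUnion₂_subset fun k hk => P.cell_subset_Ico (Finset.mem_range_succ_iff.1 hk)) fun x hx => ?_
  exact mem_biUnion (Finset.mem_range_succ_iff.2 (P.idx_le x)) (P.mem_cell_idx hx)

theorem pairwiseDisjoint_cell :
    (Finset.range (P.N + 1) : Set ℕ).PairwiseDisjoint P.cell := fun _ hi _ hj hij =>
  disjoint_left.2 fun _ hxi hxj => hij <|
    (P.idx_eq_of_mem_cell (Finset.mem_range_succ_iff.1 hi) hxi).symm.trans
      (P.idx_eq_of_mem_cell (Finset.mem_range_succ_iff.1 hj) hxj)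

theorem setLIntegral_Ioo_prod_eq_sum {α : Type*} [MeasurableSpace α] (ν : Measure α)
    [SFinite ν] {t : Set α} (ht : MeasurableSet t) (f : ℝ × α → ℝ≥0∞) :
    ∫⁻ q in Ioo 0 1 ×ˢ t, f q ∂(volume.prod ν)
      = ∑ k ∈ Finset.range (P.N + 1), ∫⁻ q in P.cell k ×ˢ t, f q ∂(volume.prod ν) := by
  rw [setLIntegral_congr (Measure.set_prod_ae_eq Ioo_ae_eq_Ico (ae_eq_refl t)), ← P.biUnion_cell,
    iUnion₂_prod_const]
  exact lintegral_biUnion_finset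
    (fun i hi j hj hij => disjoint_prod.2 (Or.inl (P.pairwiseDisjoint_cell hi hj hij)))
    (fun k _ => measurableSet_Ico.prod ht) f

variable (l : ℝ → ℝ) (ε : ℝ)

def unfold {β : Type*} [Zero β] (F : ℝ × ℝ → β) : ℝ × ℝ × ℝ → β := fun q =>
  if q.2.1 < l (P.bracket q.1) then F (P.bracket q.1 + P.Gamma l q.1 * q.2.1, ε * q.2.2) else 0

theorem _root_.unfoldOp_eq_unfold (G : ℝ → ℝ → ℝ) (φ : ℝ × ℝ → ℝ) :
    unfoldOp G l ε P φ = P.unfold l ε ((thinDomain G ε).indicator φ) := rfl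

theorem stronglyMeasurable_unfold {β : Type*} [Zero β] [TopologicalSpace β]
    {F : ℝ × ℝ → β} (hF : StronglyMeasurable F) : StronglyMeasurable (P.unfold l ε F) := by
  have hidx : Measurable P.idx := P.idx_mono.measurable
  have hbr : Measurable P.bracket := measurable_from_top.comp hidx
  have hΓ : Measurable (P.Gamma l) :=
    (measurable_from_top (f := fun k => (P.pts (k + 1) - P.pts k) / l (P.pts k))).comp hidx
  have hlbr : Measurable fun x => l (P.bracket x) :=
    (measurable_from_top (f := fun k => l (P.pts k))).comp hidx
  exact StronglyMeasurable.ite (measurableSet_lt (by fun_prop) (hlbr.comp measurable_fst))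
    (hF.comp_measurable (by fun_prop)) stronglyMeasurable_const

theorem unfold_apply_of_mem_cell {β : Type*} [Zero β] (F : ℝ × ℝ → β) {k : ℕ} (hk : k ≤ P.N)
    {q : ℝ × ℝ × ℝ} (hq : q.1 ∈ P.cell k) :
    P.unfold l ε F q = if q.2.1 < l (P.pts k) then
      F (P.pts k + (P.pts (k + 1) - P.pts k) / l (P.pts k) * q.2.1, ε * q.2.2) else 0 := by
  simp only [unfold, bracket, Gamma, P.idx_eq_of_mem_cell hk hq]

theorem enorm_unfold_rpow {E : Type*} [NormedAddCommGroup E] (f : ℝ × ℝ → E) {r : ℝ}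
    (hr : 0 < r) (q : ℝ × ℝ × ℝ) :
    ‖P.unfold l ε f q‖ₑ ^ r = P.unfold l ε (fun z => ‖f z‖ₑ ^ r) q := by
  simp only [unfold]
  split_ifs <;> simp [hr]

variable {l ε} {l0 l1 G1 : ℝ}

theorem setLIntegral_cell_prod_unfold (hε : 0 < ε) {k : ℕ} (hk : k ≤ P.N)
    (hlk : 0 < l (P.pts k)) (hlk1 : l (P.pts k) ≤ l1) {F : ℝ × ℝ → ℝ≥0∞} (hF : Measurable F) :
    ∫⁻ q in P.cell k ×ˢ Ystar l1 G1, P.unfold l ε F q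
      = ENNReal.ofReal (l (P.pts k) / ε) * ∫⁻ z in P.cell k ×ˢ Ioo 0 (ε * G1), F z := by
  set L := l (P.pts k)
  set a := (P.pts (k + 1) - P.pts k) / L with ha_def
  have hΔ : 0 < P.pts (k + 1) - P.pts k := sub_pos.2 (P.pts_lt k hk)
  have ha : 0 < a := div_pos hΔ hlk
  have hnext : P.pts (k + 1) = P.pts k + a * L := by
    rw [ha_def, div_mul_cancel₀ _ hlk.ne']
    ring
  set Φ : ℝ × ℝ → ℝ × ℝ := fun y => (P.pts k + a * y.1, ε * y.2)
  have hpre : Φ ⁻¹' (Ioo (P.pts k) (P.pts (k + 1)) ×ˢ Ioo 0 (ε * G1)) = Ioo 0 L ×ˢ Ioo 0 G1 := by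
    ext y
    simp [Φ, hnext, ha, hε]
  have hbox : MeasurableSet (Ioo 0 L ×ˢ Ioo 0 G1) := measurableSet_Ioo.prod measurableSet_Ioo
  have hsub : Ioo 0 L ×ˢ Ioo 0 G1 ⊆ Ystar l1 G1 :=
    prod_mono (Ioo_subset_Ioo_right hlk1) subset_rfl
  have hunfold : ∀ q ∈ P.cell k ×ˢ Ystar l1 G1,
      P.unfold l ε F q = (Ioo 0 L ×ˢ Ioo 0 G1).indicator (F ∘ Φ) q.2 := by
    rintro q ⟨hq1, hq2⟩
    rw [P.unfold_apply_of_mem_cell l ε F hk hq1]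
    by_cases hlt : q.2.1 < L
    · have hmem : q.2 ∈ Ioo 0 L ×ˢ Ioo 0 G1 := ⟨⟨hq2.1.1, hlt⟩, hq2.2⟩
      rw [if_pos hlt, indicator_of_mem hmem]
      rfl
    · rw [if_neg hlt, indicator_of_notMem fun h => hlt h.1.2]
  calc ∫⁻ q in P.cell k ×ˢ Ystar l1 G1, P.unfold l ε F q
      = ∫⁻ q in P.cell k ×ˢ Ystar l1 G1, (Ioo 0 L ×ˢ Ioo 0 G1).indicator (F ∘ Φ) q.2 :=
        setLIntegral_congr_fun (measurableSet_Ico.prod (measurableSet_Ioo.prod measurableSet_Ioo))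
          hunfold
    _ = volume (P.cell k) * ∫⁻ y in Ystar l1 G1, (Ioo 0 L ×ˢ Ioo 0 G1).indicator (F ∘ Φ) y :=
        setLIntegral_prod_comp_snd _ _ ((hF.comp (by fun_prop)).indicator hbox).aemeasurable
    _ = ENNReal.ofReal (P.pts (k + 1) - P.pts k) *
          ∫⁻ y in Φ ⁻¹' (Ioo (P.pts k) (P.pts (k + 1)) ×ˢ Ioo 0 (ε * G1)), F (Φ y) := by
        rw [cell, Real.volume_Ico, lintegral_indicator hbox, Measure.restrict_restrict hbox,
          inter_eq_left.2 hsub, hpre]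
        rfl
    _ = ENNReal.ofReal (P.pts (k + 1) - P.pts k) * (ENNReal.ofReal (a * ε)⁻¹ *
          ∫⁻ z in Ioo (P.pts k) (P.pts (k + 1)) ×ˢ Ioo 0 (ε * G1), F z) := by
        rw [setLIntegral_comp_affine_prod _ ha hε]
    _ = ENNReal.ofReal (L / ε) * ∫⁻ z in P.cell k ×ˢ Ioo 0 (ε * G1), F z := by
        have hae : Ioo (P.pts k) (P.pts (k + 1)) ×ˢ Ioo 0 (ε * G1) =ᵐ[volume]
            P.cell k ×ˢ Ioo 0 (ε * G1) :=
          Measure.set_prod_ae_eq Ioo_ae_eq_Ico (ae_eq_refl _)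
        rw [← mul_assoc, ← ENNReal.ofReal_mul hΔ.le, setLIntegral_congr hae]
        congr 2
        field_simp
        linarith

theorem lintegral_unfold_eq_sum_of_measurable (hε : 0 < ε)
    (hl : ∀ x ∈ Ico (0 : ℝ) 1, 0 < l x ∧ l x ≤ l1) {F : ℝ × ℝ → ℝ≥0∞} (hF : Measurable F) :
    ∫⁻ q in Ioo 0 1 ×ˢ Ystar l1 G1, P.unfold l ε F q
      = ∑ k ∈ Finset.range (P.N + 1),
          ENNReal.ofReal (l (P.pts k) / ε) * ∫⁻ z in P.cell k ×ˢ Ioo 0 (ε * G1), F z := by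
  rw [Measure.volume_eq_prod,
    P.setLIntegral_Ioo_prod_eq_sum (t := Ystar l1 G1) _ (measurableSet_Ioo.prod measurableSet_Ioo)]
  refine Finset.sum_congr rfl fun k hk => ?_
  have hk' : k ≤ P.N := Finset.mem_range_succ_iff.1 hk
  exact P.setLIntegral_cell_prod_unfold hε hk' (hl _ (P.pts_mem_Ico hk')).1
    (hl _ (P.pts_mem_Ico hk')).2 hF

-- By the cell formula, the unfolding of the indicator of a null set has integral zero.
theorem unfold_ae_congr {β : Type*} [Zero β] (hε : 0 < ε)
    (hl : ∀ x ∈ Ico (0 : ℝ) 1, 0 < l x ∧ l x ≤ l1) {F F' : ℝ × ℝ → β} (h : F =ᵐ[volume] F') :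
    P.unfold l ε F =ᵐ[volume.restrict (Ioo 0 1 ×ˢ Ystar l1 G1)] P.unfold l ε F' := by
  set N := toMeasurable volume {z | F z ≠ F' z}
  have hNm : MeasurableSet N := measurableSet_toMeasurable _ _
  have hN : volume N = 0 := by
    rw [measure_toMeasurable]
    exact h
  have hNmeas : Measurable (N.indicator (1 : ℝ × ℝ → ℝ≥0∞)) := measurable_one.indicator hNm
  have hzero : ∫⁻ q in Ioo 0 1 ×ˢ Ystar l1 G1, P.unfold l ε (N.indicator 1) q = 0 := by
    rw [P.lintegral_unfold_eq_sum_of_measurable hε hl hNmeas]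
    refine Finset.sum_eq_zero fun k _ => ?_
    rw [lintegral_indicator_one hNm, Measure.restrict_apply hNm,
      measure_mono_null inter_subset_left hN, mul_zero]
  filter_upwards [(lintegral_eq_zero_iff
    (P.stronglyMeasurable_unfold l ε hNmeas.stronglyMeasurable).measurable).1 hzero] with q hq
  simp only [unfold, Pi.zero_apply] at hq ⊢
  split_ifs at hq ⊢
  · by_contra hne
    exact one_ne_zero ((indicator_of_mem (subset_toMeasurable _ _ hne) 1).symm.trans hq)
  · rfl

theorem aestronglyMeasurable_unfold {β : Type*} [Zero β] [TopologicalSpace β] (hε : 0 < ε)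
    (hl : ∀ x ∈ Ico (0 : ℝ) 1, 0 < l x ∧ l x ≤ l1) {f : ℝ × ℝ → β}
    (hf : AEStronglyMeasurable f volume) :
    AEStronglyMeasurable (P.unfold l ε f) (volume.restrict (Ioo 0 1 ×ˢ Ystar l1 G1)) :=
  (P.stronglyMeasurable_unfold l ε hf.stronglyMeasurable_mk).aestronglyMeasurable.congr
    (P.unfold_ae_congr hε hl hf.ae_eq_mk).symm

theorem lintegral_unfold_eq_sum (hε : 0 < ε) (hl : ∀ x ∈ Ico (0 : ℝ) 1, 0 < l x ∧ l x ≤ l1)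
    {F : ℝ × ℝ → ℝ≥0∞} (hF : AEMeasurable F volume) :
    ∫⁻ q in Ioo 0 1 ×ˢ Ystar l1 G1, P.unfold l ε F q
      = ∑ k ∈ Finset.range (P.N + 1),
          ENNReal.ofReal (l (P.pts k) / ε) * ∫⁻ z in P.cell k ×ˢ Ioo 0 (ε * G1), F z := by
  rw [lintegral_congr_ae (P.unfold_ae_congr hε hl hF.ae_eq_mk),
    P.lintegral_unfold_eq_sum_of_measurable hε hl hF.measurable_mk]
  exact Finset.sum_congr rfl fun k _ =>
    congrArg _ (lintegral_congr_ae (ae_restrict_of_ae hF.ae_eq_mk.symm))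

theorem lintegral_unfold_le (hε : 0 < ε) (hl : ∀ x ∈ Ico (0 : ℝ) 1, 0 < l x ∧ l x ≤ l1)
    {F : ℝ × ℝ → ℝ≥0∞} (hF : AEMeasurable F volume) :
    ∫⁻ q in Ioo 0 1 ×ˢ Ystar l1 G1, P.unfold l ε F q
      ≤ ENNReal.ofReal (l1 / ε) * ∫⁻ z in Ioo 0 1 ×ˢ Ioo 0 (ε * G1), F z := by
  rw [P.lintegral_unfold_eq_sum hε hl hF, Measure.volume_eq_prod,
    P.setLIntegral_Ioo_prod_eq_sum _ measurableSet_Ioo, Finset.mul_sum]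
  gcongr with k hk
  exact (hl _ (P.pts_mem_Ico (Finset.mem_range_succ_iff.1 hk))).2

theorem le_lintegral_unfold (hε : 0 < ε) (hl : ∀ x ∈ Ico (0 : ℝ) 1, 0 < l x ∧ l x ≤ l1)
    (hl0 : ∀ x ∈ Ico (0 : ℝ) 1, l0 ≤ l x) {F : ℝ × ℝ → ℝ≥0∞} (hF : AEMeasurable F volume) :
    ENNReal.ofReal (l0 / ε) * ∫⁻ z in Ioo 0 1 ×ˢ Ioo 0 (ε * G1), F z
      ≤ ∫⁻ q in Ioo 0 1 ×ˢ Ystar l1 G1, P.unfold l ε F q := by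
  rw [P.lintegral_unfold_eq_sum hε hl hF, Measure.volume_eq_prod,
    P.setLIntegral_Ioo_prod_eq_sum _ measurableSet_Ioo, Finset.mul_sum]
  gcongr with k hk
  exact hl0 _ (P.pts_mem_Ico (Finset.mem_range_succ_iff.1 hk))

variable {E : Type*} [NormedAddCommGroup E] {p : ℝ≥0∞}

theorem eLpNorm_unfold_le (hp0 : p ≠ 0) (hp : p ≠ ∞) (hε : 0 < ε)
    (hl : ∀ x ∈ Ico (0 : ℝ) 1, 0 < l x ∧ l x ≤ l1) {f : ℝ × ℝ → E}
    (hf : AEStronglyMeasurable f volume) :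
    eLpNorm (P.unfold l ε f) p (volume.restrict (Ioo 0 1 ×ˢ Ystar l1 G1))
      ≤ ENNReal.ofReal (l1 / ε) ^ (1 / p.toReal) *
          eLpNorm f p (volume.restrict (Ioo 0 1 ×ˢ Ioo 0 (ε * G1))) := by
  have hpos : 0 < p.toReal := ENNReal.toReal_pos hp0 hp
  simp only [eLpNorm_eq_lintegral_rpow_enorm_toReal hp0 hp, P.enorm_unfold_rpow l ε f hpos]
  rw [← ENNReal.mul_rpow_of_nonneg _ _ (by positivity)]
  gcongr
  exact P.lintegral_unfold_le hε hl (hf.enorm.pow_const _)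

theorem le_eLpNorm_unfold (hp0 : p ≠ 0) (hp : p ≠ ∞) (hε : 0 < ε)
    (hl : ∀ x ∈ Ico (0 : ℝ) 1, 0 < l x ∧ l x ≤ l1) (hl0 : ∀ x ∈ Ico (0 : ℝ) 1, l0 ≤ l x)
    {f : ℝ × ℝ → E} (hf : AEStronglyMeasurable f volume) :
    ENNReal.ofReal (l0 / ε) ^ (1 / p.toReal) *
        eLpNorm f p (volume.restrict (Ioo 0 1 ×ˢ Ioo 0 (ε * G1)))
      ≤ eLpNorm (P.unfold l ε f) p (volume.restrict (Ioo 0 1 ×ˢ Ystar l1 G1)) := by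
  have hpos : 0 < p.toReal := ENNReal.toReal_pos hp0 hp
  simp only [eLpNorm_eq_lintegral_rpow_enorm_toReal hp0 hp, P.enorm_unfold_rpow l ε f hpos]
  rw [← ENNReal.mul_rpow_of_nonneg _ _ (by positivity)]
  gcongr
  exact P.le_lintegral_unfold hε hl hl0 (hf.enorm.pow_const _)

end ThinPartition

theorem unfolding_Lp_bounds_general
    (l0 l1 G0 G1 : ℝ) (hl0 : 0 < l0) (hl01 : l0 < l1)
    (l : ℝ → ℝ)
    (hlb : ∀ x ∈ Icc (0 : ℝ) 1, l0 ≤ l x ∧ l x < l1)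
    (G : ℝ → ℝ → ℝ)
    (hGcont : ContinuousOn (fun z : ℝ × ℝ => G z.1 z.2) (Ioo 0 1 ×ˢ (univ : Set ℝ)))
    (hGb : ∀ x ∈ Ioo (0 : ℝ) 1, ∀ y : ℝ, G0 ≤ G x y ∧ G x y ≤ G1)
    (ε : ℝ) (hε : 0 < ε) (P : ThinPartition)
    (p : ℝ) (hp : 1 ≤ p)
    (φ : ℝ × ℝ → ℝ)
    (hφ : MemLp φ (ENNReal.ofReal p) (volume.restrict (thinDomain G ε))) :
    MemLp (unfoldOp G l ε P φ) (ENNReal.ofReal p)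
        (volume.restrict (Ioo (0 : ℝ) 1 ×ˢ Ystar l1 G1)) ∧
    (l0 / ε) ^ (1 / p) * (∫ z in thinDomain G ε, |φ z| ^ p) ^ (1 / p)
      ≤ (∫ q in Ioo (0 : ℝ) 1 ×ˢ Ystar l1 G1, |unfoldOp G l ε P φ q| ^ p) ^ (1 / p) ∧
    (∫ q in Ioo (0 : ℝ) 1 ×ˢ Ystar l1 G1, |unfoldOp G l ε P φ q| ^ p) ^ (1 / p)
      ≤ (l1 / ε) ^ (1 / p) * (∫ z in thinDomain G ε, |φ z| ^ p) ^ (1 / p) := by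
  have hp0 : 0 < p := by linarith
  have hlb' : ∀ x ∈ Ico (0 : ℝ) 1, l0 ≤ l x ∧ l x < l1 := fun x hx =>
    hlb x (Ico_subset_Icc_self hx)
  have hl : ∀ x ∈ Ico (0 : ℝ) 1, 0 < l x ∧ l x ≤ l1 := fun x hx =>
    ⟨hl0.trans_le (hlb' x hx).1, (hlb' x hx).2.le⟩
  have hD : MeasurableSet (thinDomain G ε) := (isOpen_thinDomain ε hGcont).measurableSet
  have hφ' : AEStronglyMeasurable ((thinDomain G ε).indicator φ) volume :=
    (aestronglyMeasurable_indicator_iff hD).2 hφ.1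
  have hupp := P.eLpNorm_unfold_le (G1 := G1) (by simpa using hp0) ENNReal.ofReal_ne_top hε hl hφ'
  have hlow := P.le_eLpNorm_unfold (G1 := G1) (by simpa using hp0) ENNReal.ofReal_ne_top hε hl
    (fun x hx => (hlb' x hx).1) hφ'
  rw [← unfoldOp_eq_unfold, eLpNorm_indicator_eq_eLpNorm_restrict hD,
    Measure.restrict_restrict_of_subset (thinDomain_subset hε fun x hx y => (hGb x hx y).2)]
    at hupp hlow
  have hc : ENNReal.ofReal (l1 / ε) ^ (1 / (ENNReal.ofReal p).toReal) ≠ ∞ :=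
    ENNReal.rpow_ne_top_of_nonneg (by positivity) ENNReal.ofReal_ne_top
  have hT : MemLp (unfoldOp G l ε P φ) (ENNReal.ofReal p)
      (volume.restrict (Ioo (0 : ℝ) 1 ×ˢ Ystar l1 G1)) :=
    ⟨P.aestronglyMeasurable_unfold hε hl hφ', hupp.trans_lt (ENNReal.mul_lt_top hc.lt_top hφ.2)⟩
  refine ⟨hT, ?_, ?_⟩
  · rw [← hφ.toReal_ofReal_rpow_mul_eLpNorm hp0 (by positivity), ← hT.toReal_eLpNorm_ofReal hp0]
    exact ENNReal.toReal_mono hT.eLpNorm_ne_top hlow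
  · rw [← hφ.toReal_ofReal_rpow_mul_eLpNorm hp0 (div_nonneg (hl0.trans hl01).le hε.le),
      ← hT.toReal_eLpNorm_ofReal hp0]
    exact ENNReal.toReal_mono (ENNReal.mul_ne_top hc hφ.eLpNorm_ne_top) hupp

/-- `L^p` bounds for the unfolding operator (Prop. 3.3(iv), `1 ≤ p < ∞`). -/
theorem unfolding_Lp_bounds
    (l0 l1 G0 G1 : ℝ) (hl0 : 0 < l0) (hl01 : l0 < l1) (hG0 : 0 < G0) (hG01 : G0 ≤ G1)
    (l : ℝ → ℝ) (hlC1 : ContDiffOn ℝ 1 l (Ioo 0 1))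
    (hlb : ∀ x ∈ Icc (0 : ℝ) 1, l0 ≤ l x ∧ l x < l1)
    (G : ℝ → ℝ → ℝ)
    (hGcont : ContinuousOn (fun z : ℝ × ℝ => G z.1 z.2) (Ioo 0 1 ×ˢ (univ : Set ℝ)))
    (hGb : ∀ x ∈ Ioo (0 : ℝ) 1, ∀ y : ℝ, G0 ≤ G x y ∧ G x y ≤ G1)
    (hGper : ∀ x ∈ Ioo (0 : ℝ) 1, ∀ y : ℝ, G x (y + l x) = G x y)
    (ε : ℝ) (hε : 0 < ε) (P : ThinPartition)
    (p : ℝ) (hp : 1 ≤ p)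
    (φ : ℝ × ℝ → ℝ)
    (hφ : MemLp φ (ENNReal.ofReal p) (volume.restrict (thinDomain G ε))) :
    MemLp (unfoldOp G l ε P φ) (ENNReal.ofReal p)
        (volume.restrict (Ioo (0 : ℝ) 1 ×ˢ Ystar l1 G1)) ∧
    (l0 / ε) ^ (1 / p) * (∫ z in thinDomain G ε, |φ z| ^ p) ^ (1 / p)
      ≤ (∫ q in Ioo (0 : ℝ) 1 ×ˢ Ystar l1 G1, |unfoldOp G l ε P φ q| ^ p) ^ (1 / p) ∧
    (∫ q in Ioo (0 : ℝ) 1 ×ˢ Ystar l1 G1, |unfoldOp G l ε P φ q| ^ p) ^ (1 / p)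
      ≤ (l1 / ε) ^ (1 / p) * (∫ z in thinDomain G ε, |φ z| ^ p) ^ (1 / p) :=
  unfolding_Lp_bounds_general l0 l1 G0 G1 hl0 hl01 l hlb G hGcont hGb ε hε P p hp φ hφ
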